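/- arXiv:2010.01741 — 4 statements merged into one kernel-verified Lean document; each statement's English description precedes it below -/
import Mathlib

section
/- For any vector s ∈ ℝⁿ and any integer k with 1 ≤ k ≤ n, the sum of the k largest entries of s equals the minimum over λ ∈ ℝ of kλ + Σ_{i=1}^n max(s_i − λ, 0). Moreover, the k-th largest entry s_[k] achieves this minimum. -/
lemma card_filter_lt_fin (n k : ℕ) (hkn : k ≤ n) :
    (Finset.univ.filter fun i : Fin n => (i : ℕ) < k).card = k := by
  have : (Finset.univ.filter fun i : Fin n => (i : ℕ) < k) =
      (Finset.range k).attachFin (fun m hm => lt_of_lt_of_le (Finset.mem_range.mp hm) hkn) := by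
    ext i
    simp [Finset.mem_attachFin]
  rw [this, Finset.card_attachFin, Finset.card_range]

/-- For s ∈ ℝⁿ and 1 ≤ k ≤ n, the sum of the k largest entries of s
(given via a sorting permutation σ arranging s in decreasing order) is the least
element of the set {kλ + Σᵢ max(sᵢ − λ, 0) | λ ∈ ℝ}, and the k-th largest entry
s_[k] = s (σ (k−1)) achieves this minimum. -/
theorem stmt_0 (n k : ℕ) (hk1 : 1 ≤ k) (hkn : k ≤ n) (s : Fin n → ℝ)
    (σ : Equiv.Perm (Fin n)) (hσ : ∀ i j : Fin n, i ≤ j → s (σ j) ≤ s (σ i)) :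
    IsLeast {v : ℝ | ∃ lam : ℝ, v = (k : ℝ) * lam + ∑ i, max (s i - lam) 0}
      (∑ i ∈ Finset.univ.filter fun i : Fin n => (i : ℕ) < k, s (σ i)) ∧
    (k : ℝ) * s (σ ⟨k - 1, by omega⟩) + ∑ i, max (s i - s (σ ⟨k - 1, by omega⟩)) 0 =
      ∑ i ∈ Finset.univ.filter fun i : Fin n => (i : ℕ) < k, s (σ i) := by
  set K : Finset (Fin n) := Finset.univ.filter fun i : Fin n => (i : ℕ) < k with hK
  have hKcard : K.card = k := card_filter_lt_fin n k hkn
  have hperm : ∀ lam : ℝ, (∑ i, max (s i - lam) 0) = ∑ i, max (s (σ i) - lam) 0 := by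
    intro lam
    exact (Equiv.sum_comp σ (fun i => max (s i - lam) 0)).symm
  -- equality at lam* = s (σ ⟨k-1⟩)
  have key : ∀ (lamstar : ℝ), lamstar = s (σ ⟨k - 1, by omega⟩) →
      (k : ℝ) * lamstar + ∑ i, max (s i - lamstar) 0 = ∑ i ∈ K, s (σ i) := by
    intro lamstar hls
    rw [hperm]
    have hsplit : (∑ i, max (s (σ i) - lamstar) 0) =
        ∑ i ∈ K, max (s (σ i) - lamstar) 0 + ∑ i ∈ Kᶜ, max (s (σ i) - lamstar) 0 := by
      rw [Finset.sum_add_sum_compl]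
    rw [hsplit]
    have h1 : ∑ i ∈ K, max (s (σ i) - lamstar) 0 = ∑ i ∈ K, (s (σ i) - lamstar) := by
      apply Finset.sum_congr rfl
      intro i hi
      have hik : (i : ℕ) < k := (Finset.mem_filter.mp hi).2
      have hle : i ≤ (⟨k - 1, by omega⟩ : Fin n) := by
        exact Fin.mk_le_mk.mpr (by omega) |>.trans_eq rfl |>.trans_eq rfl |>.trans_eq rfl
      have := hσ i ⟨k - 1, by omega⟩ (by simpa [Fin.le_def] using Nat.le_sub_one_of_lt hik)
      rw [← hls] at this
      rw [max_eq_left (by linarith)]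
    have h2 : ∑ i ∈ Kᶜ, max (s (σ i) - lamstar) 0 = 0 := by
      apply Finset.sum_eq_zero
      intro i hi
      have hik : ¬ (i : ℕ) < k := by
        simpa [hK] using hi
      have := hσ ⟨k - 1, by omega⟩ i (by simp [Fin.le_def]; omega)
      rw [← hls] at this
      rw [max_eq_right (by linarith)]
    rw [h1, h2, Finset.sum_sub_distrib, Finset.sum_const, hKcard]
    ring
  constructor
  · constructor
    · exact ⟨s (σ ⟨k - 1, by omega⟩), (key _ rfl).symm⟩
    · rintro v ⟨lam, rfl⟩
      rw [hperm]
      have h3 : ∑ i ∈ K, s (σ i) = (k : ℝ) * lam + ∑ i ∈ K, (s (σ i) - lam) := by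
        rw [Finset.sum_sub_distrib, Finset.sum_const, hKcard]; ring
      rw [h3]
      gcongr
      calc ∑ i ∈ K, (s (σ i) - lam) ≤ ∑ i ∈ K, max (s (σ i) - lam) 0 := by
            apply Finset.sum_le_sum; intro i _; exact le_max_left _ _
        _ ≤ ∑ i, max (s (σ i) - lam) 0 := by
            apply Finset.sum_le_sum_of_subset_of_nonneg (Finset.subset_univ K)
            intro i _ _; exact le_max_right _ _
  · exact key _ rfl
end

section
/- If each function s_i : Θ → ℝ (i = 1,...,n, Θ a real vector space) is convex, then for integers 0 ≤ m < k ≤ n the minimum over θ of ψ_{m,k}(S(θ)) equals the minimum over θ of [min_λ {kλ + Σ_i [s_i(θ) − λ]_+} − min_{λ̂} {mλ̂ + Σ_i [s_i(θ) − λ̂]_+}]. -/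
/-- Sum of the ranked range of `s`: ranks m+1,…,k in decreasing order. -/
noncomputable def rsum {n : ℕ} (s : Fin n → ℝ) (m k : ℕ) : ℝ :=
  ∑ j ∈ Finset.univ.filter (fun j : Fin n => n - k ≤ (j : ℕ) ∧ (j : ℕ) < n - m),
    s (Tuple.sort s j)


lemma card_filter_ge (n k : ℕ) (h : k ≤ n) :
    (Finset.univ.filter fun j : Fin n => n - k ≤ (j:ℕ)).card = k := by
  have : (Finset.univ.filter fun j : Fin n => n - k ≤ (j:ℕ)) =
      (Finset.Ico (n-k) n).attachFin (fun m hm => (Finset.mem_Ico.mp hm).2) := by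
    ext j; simp [Finset.mem_attachFin, j.isLt]
  rw [this, Finset.card_attachFin, Nat.card_Ico]; omega

lemma topk_eq (n k : ℕ) (hn : 1 ≤ n) (hkn : k ≤ n) (x : Fin n → ℝ) :
    sInf {w : ℝ | ∃ lam : ℝ, w = (k : ℝ) * lam + ∑ i, max (x i - lam) 0} =
      ∑ j ∈ Finset.univ.filter (fun j : Fin n => n - k ≤ (j:ℕ)), x (Tuple.sort x j) := by
  set y : Fin n → ℝ := x ∘ Tuple.sort x with hy
  have hmono : Monotone y := Tuple.monotone_sort x
  set A : Finset (Fin n) := Finset.univ.filter (fun j : Fin n => n - k ≤ (j:ℕ)) with hA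
  have hcard : A.card = k := card_filter_ge n k hkn
  set T : ℝ := ∑ j ∈ A, y j with hT
  -- lower bound
  have hlb : ∀ lam : ℝ, T ≤ (k : ℝ) * lam + ∑ i, max (x i - lam) 0 := by
    intro lam
    have hsum : ∑ i, max (x i - lam) 0 = ∑ j, max (y j - lam) 0 :=
      (Equiv.sum_comp (Tuple.sort x) (fun i => max (x i - lam) 0)).symm
    have h1 : ∑ j ∈ A, max (y j - lam) 0 ≤ ∑ j, max (y j - lam) 0 :=
      Finset.sum_le_sum_of_subset_of_nonneg (Finset.subset_univ A)
        (fun j _ _ => le_max_right _ _)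
    have h2 : ∑ j ∈ A, (y j - lam) ≤ ∑ j ∈ A, max (y j - lam) 0 :=
      Finset.sum_le_sum (fun j _ => le_max_left _ _)
    have h3 : ∑ j ∈ A, (y j - lam) = T - (k : ℝ) * lam := by
      rw [Finset.sum_sub_distrib, Finset.sum_const, hcard, nsmul_eq_mul]
    rw [hsum]; linarith
  -- achieved
  have hidx : n - max k 1 < n := by omega
  set lam0 : ℝ := y ⟨n - max k 1, hidx⟩ with hlam0
  have hach : (k : ℝ) * lam0 + ∑ i, max (x i - lam0) 0 = T := by
    have hsum : ∑ i, max (x i - lam0) 0 = ∑ j, max (y j - lam0) 0 :=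
      (Equiv.sum_comp (Tuple.sort x) (fun i => max (x i - lam0) 0)).symm
    have hsplit : ∑ j, max (y j - lam0) 0 =
        ∑ j ∈ A, max (y j - lam0) 0 + ∑ j ∈ Finset.univ.filter (fun j : Fin n => ¬ (n - k ≤ (j:ℕ))), max (y j - lam0) 0 := by
      rw [hA, Finset.sum_filter_add_sum_filter_not]
    have hAeq : ∀ j ∈ A, max (y j - lam0) 0 = y j - lam0 := by
      intro j hj
      rw [hA, Finset.mem_filter] at hj
      have hle : (⟨n - max k 1, hidx⟩ : Fin n) ≤ j := by
        rw [Fin.le_def]; have := hj.2; exact (show n - max k 1 ≤ (j:ℕ) by omega)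
      have : lam0 ≤ y j := hmono hle
      simp [max_eq_left, sub_nonneg.mpr this]
    have hBeq : ∀ j ∈ Finset.univ.filter (fun j : Fin n => ¬ (n - k ≤ (j:ℕ))), max (y j - lam0) 0 = 0 := by
      intro j hj
      rw [Finset.mem_filter] at hj
      have hjle : j ≤ (⟨n - max k 1, hidx⟩ : Fin n) := by
        simp only [not_le] at hj
        have := j.isLt
        exact Fin.le_def.mpr (show (j:ℕ) ≤ n - max k 1 by omega)
      have : y j ≤ lam0 := hmono hjle
      simp [max_eq_right, sub_nonpos.mpr this]
    rw [hsum, hsplit, Finset.sum_congr rfl hAeq, Finset.sum_congr rfl hBeq,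
      Finset.sum_const_zero, add_zero, Finset.sum_sub_distrib, Finset.sum_const, hcard,
      nsmul_eq_mul]
    ring
  apply le_antisymm
  · exact csInf_le ⟨T, fun w ⟨lam, hw⟩ => hw ▸ hlb lam⟩ ⟨lam0, hach.symm⟩
  · exact le_csInf ⟨_, lam0, rfl⟩ (fun w ⟨lam, hw⟩ => hw ▸ hlb lam)


lemma rsum_eq_diff (n m k : ℕ) (hmk : m < k) (hkn : k ≤ n) (x : Fin n → ℝ) :
    rsum x m k =
      sInf {w : ℝ | ∃ lam : ℝ, w = (k : ℝ) * lam + ∑ i, max (x i - lam) 0}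
        - sInf {w : ℝ | ∃ lam : ℝ, w = (m : ℝ) * lam + ∑ i, max (x i - lam) 0} := by
  have hn : 1 ≤ n := by omega
  rw [topk_eq n k hn hkn x, topk_eq n m hn (by omega) x]
  set y : Fin n → ℝ := fun j => x (Tuple.sort x j)
  set A : Finset (Fin n) := Finset.univ.filter (fun j : Fin n => n - k ≤ (j:ℕ)) with hA
  set B : Finset (Fin n) := Finset.univ.filter (fun j : Fin n => n - m ≤ (j:ℕ)) with hB
  have hBA : B ⊆ A := by
    intro j hj
    rw [hB, Finset.mem_filter] at hj
    rw [hA, Finset.mem_filter]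
    exact ⟨hj.1, by omega⟩
  have hdiff : Finset.univ.filter (fun j : Fin n => n - k ≤ (j:ℕ) ∧ (j:ℕ) < n - m) = A \ B := by
    ext j
    simp only [hA, hB, Finset.mem_sdiff, Finset.mem_filter, Finset.mem_univ, true_and]
    omega
  have := Finset.sum_sdiff (f := y) hBA
  unfold rsum
  rw [hdiff]
  linarith

/-- for convex individual functions s_i : Θ → ℝ and 0 ≤ m < k ≤ n,
min_θ ψ_{m,k}(S(θ)) = min_θ [ min_λ {kλ + Σᵢ [sᵢ(θ) − λ]₊} − min_λ̂ {mλ̂ + Σᵢ [sᵢ(θ) − λ̂]₊} ]. -/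
theorem stmt_2 {E : Type*} [AddCommGroup E] [Module ℝ E] (n m k : ℕ)
    (hmk : m < k) (hkn : k ≤ n) (s : Fin n → E → ℝ)
    (hconv : ∀ i, ConvexOn ℝ Set.univ (s i)) :
    sInf {v : ℝ | ∃ θ : E, v = rsum (fun i => s i θ) m k} =
      sInf {v : ℝ | ∃ θ : E,
        v = sInf {w : ℝ | ∃ lam : ℝ, w = (k : ℝ) * lam + ∑ i, max (s i θ - lam) 0}
          - sInf {w : ℝ | ∃ lam : ℝ, w = (m : ℝ) * lam + ∑ i, max (s i θ - lam) 0}} := by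
  have hset : {v : ℝ | ∃ θ : E, v = rsum (fun i => s i θ) m k} =
      {v : ℝ | ∃ θ : E,
        v = sInf {w : ℝ | ∃ lam : ℝ, w = (k : ℝ) * lam + ∑ i, max (s i θ - lam) 0}
          - sInf {w : ℝ | ∃ lam : ℝ, w = (m : ℝ) * lam + ∑ i, max (s i θ - lam) 0}} := by
    ext v
    simp only [Set.mem_setOf_eq, rsum_eq_diff n m k hmk hkn]
  rw [hset]
end

section
/- Let Θ = (θ_1,...,θ_l) with θ_j ∈ ℝ^d, let x ∈ ℝ^d, and let Y be a nonempty proper subset of {1,...,l}. Define s_j = [1 + θ_jᵀx − min_{y ∈ Y} θ_yᵀx]_+ for each j ∈ {1,...,l}. Then [1 + max_{y ∉ Y} θ_yᵀx − min_{y ∈ Y} θ_yᵀx]_+ ≥ s_[|Y|+1], where s_[r] denotes the r-th largest of s_1,...,s_l. -/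
/-- The multi-label margin scores: s_j = [1 + θ_jᵀx − min_{y ∈ Y} θ_yᵀx]₊. -/
noncomputable def marginScore {l d : ℕ} (Th : Fin l → Fin d → ℝ) (x : Fin d → ℝ)
    (Y : Finset (Fin l)) (hY : Y.Nonempty) : Fin l → ℝ :=
  fun j => max (1 + ∑ a, Th j a * x a - Y.inf' hY (fun y => ∑ a, Th y a * x a)) 0

/-- the conventional multi-label loss upper-bounds the TKML loss:
[1 + max_{y ∉ Y} θ_yᵀx − min_{y ∈ Y} θ_yᵀx]₊ ≥ s_[|Y|+1], where s_[r] is the r-th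
largest of the scores s_1,…,s_l (ascending position l − (|Y|+1) of the sorted scores). -/
theorem stmt_10 (l d : ℕ) (Th : Fin l → Fin d → ℝ) (x : Fin d → ℝ)
    (Y : Finset (Fin l)) (hY : Y.Nonempty) (hY2 : Y ≠ Finset.univ) :
    max (1 + (Yᶜ.sup' (by
          rw [← Finset.card_pos, Finset.card_compl, Fintype.card_fin]
          have := (Finset.card_lt_iff_ne_univ Y).mpr hY2
          rw [Fintype.card_fin] at this
          omega) (fun y => ∑ a, Th y a * x a))
        - Y.inf' hY (fun y => ∑ a, Th y a * x a)) 0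
      ≥ marginScore Th x Y hY
          (Tuple.sort (marginScore Th x Y hY)
            ⟨l - (Y.card + 1), by
              have := (Finset.card_lt_iff_ne_univ Y).mpr hY2
              rw [Fintype.card_fin] at this
              omega⟩) := by
  have hcard := (Finset.card_lt_iff_ne_univ Y).mpr hY2
  rw [Fintype.card_fin] at hcard
  set s := marginScore Th x Y hY with hs
  set σ := Tuple.sort s with hσ
  set m : Fin l := ⟨l - (Y.card + 1), by omega⟩ with hm
  -- the image of Ici m under σ has card Y.card + 1 > Y.card, so some element is ∉ Y
  have himg : ((Finset.Ici m).image σ).card = Y.card + 1 := by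
    rw [Finset.card_image_of_injective _ σ.injective, Fin.card_Ici]
    simp [hm]
    omega
  have hex : ∃ p ∈ Finset.Ici m, σ p ∉ Y := by
    by_contra h
    push_neg at h
    have hsub : (Finset.Ici m).image σ ⊆ Y := by
      intro j hj
      obtain ⟨p, hp, rfl⟩ := Finset.mem_image.mp hj
      exact h p hp
    have := Finset.card_le_card hsub
    omega
  obtain ⟨p, hp, hpY⟩ := hex
  have h1 : s (σ m) ≤ s (σ p) := Tuple.monotone_sort s (Finset.mem_Ici.mp hp)
  have h2 : s (σ p) ≤ max (1 + (Yᶜ.sup' (by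
          rw [← Finset.card_pos, Finset.card_compl, Fintype.card_fin]
          omega) (fun y => ∑ a, Th y a * x a))
        - Y.inf' hY (fun y => ∑ a, Th y a * x a)) 0 := by
    apply max_le_max _ le_rfl
    have : ∑ a, Th (σ p) a * x a ≤ Yᶜ.sup' (by
          rw [← Finset.card_pos, Finset.card_compl, Fintype.card_fin]
          omega) (fun y => ∑ a, Th y a * x a) :=
      Finset.le_sup' (fun y => ∑ a, Th y a * x a) (Finset.mem_compl.mpr hpY)
    linarith
  exact le_trans h1 h2
end

section
/- For any vector s ∈ ℝⁿ with nonnegative entries s_i and integers 0 ≤ m < k ≤ n, the sum of ranked range admits the min-max representation ψ_{m,k}(s) = min_{λ ≥ 0} max_{λ̂ ≥ λ} [ Σ_{i=1}^n ([s_i − λ]_+ − [s_i − λ̂]_+) + kλ − mλ̂ ], and the optimum is attained at λ = s_[k], λ̂ = s_[m]. -/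
/-- The min-max objective F(λ,λ̂) = Σᵢ ([sᵢ − λ]₊ − [sᵢ − λ̂]₊) + kλ − mλ̂. -/
noncomputable def Fobj {n : ℕ} (s : Fin n → ℝ) (m k : ℕ) (lam lamhat : ℝ) : ℝ :=
  (∑ i, (max (s i - lam) 0 - max (s i - lamhat) 0)) + (k : ℝ) * lam - (m : ℝ) * lamhat

private lemma card_ge (n a : ℕ) :
    (Finset.univ.filter fun j : Fin n => a ≤ (j : ℕ)).card = n - a := by
  rw [Finset.card_filter, Fin.sum_univ_eq_sum_range (fun j => if a ≤ j then 1 else 0),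
    ← Finset.card_filter]
  have h : (Finset.range n).filter (fun j => a ≤ j) = Finset.Ico a n := by
    ext j; simp [Finset.mem_Ico]; omega
  rw [h, Nat.card_Ico]

private lemma card_between (n a b : ℕ) (hb : b ≤ n) :
    (Finset.univ.filter fun j : Fin n => a ≤ (j : ℕ) ∧ (j : ℕ) < b).card = b - a := by
  rw [Finset.card_filter,
    Fin.sum_univ_eq_sum_range (fun j => if a ≤ j ∧ j < b then 1 else 0),
    ← Finset.card_filter]
  have h : (Finset.range n).filter (fun j => a ≤ j ∧ j < b) = Finset.Ico a b := by
    ext j; simp [Finset.mem_Ico]; omega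
  rw [h, Nat.card_Ico]

/-- lower bound on the top-k Lagrangian. -/
private lemma Gge {n : ℕ} (t : Fin n → ℝ) (k : ℕ) (hk : k ≤ n) (lam : ℝ) :
    ∑ j ∈ Finset.univ.filter (fun j : Fin n => n - k ≤ (j : ℕ)), t j ≤
      (∑ j, max (t j - lam) 0) + (k : ℝ) * lam := by
  have h1 : ∑ j ∈ Finset.univ.filter (fun j : Fin n => n - k ≤ (j : ℕ)), (t j - lam) ≤
      ∑ j ∈ Finset.univ.filter (fun j : Fin n => n - k ≤ (j : ℕ)), max (t j - lam) 0 :=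
    Finset.sum_le_sum fun j _ => le_max_left _ _
  have h2 : ∑ j ∈ Finset.univ.filter (fun j : Fin n => n - k ≤ (j : ℕ)), max (t j - lam) 0 ≤
      ∑ j, max (t j - lam) 0 :=
    Finset.sum_le_sum_of_subset_of_nonneg (Finset.filter_subset _ _)
      fun j _ _ => le_max_right _ _
  have h3 : ∑ j ∈ Finset.univ.filter (fun j : Fin n => n - k ≤ (j : ℕ)), (t j - lam) =
      (∑ j ∈ Finset.univ.filter (fun j : Fin n => n - k ≤ (j : ℕ)), t j) - (k : ℝ) * lam := by
    rw [Finset.sum_sub_distrib, Finset.sum_const, card_ge]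
    have h2' : n - (n - k) = k := by omega
    rw [h2', nsmul_eq_mul]
  linarith

/-- the top-k Lagrangian is tight at `λ = t (n-k)` for monotone `t`. -/
private lemma Geq {n : ℕ} (t : Fin n → ℝ) (ht : Monotone t) (k : ℕ)
    (hk : k ≤ n) (hnk : n - k < n) :
    (∑ j, max (t j - t ⟨n - k, hnk⟩) 0) + (k : ℝ) * t ⟨n - k, hnk⟩ =
      ∑ j ∈ Finset.univ.filter (fun j : Fin n => n - k ≤ (j : ℕ)), t j := by
  have key : (∑ j, max (t j - t ⟨n - k, hnk⟩) 0) =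
      ∑ j ∈ Finset.univ.filter (fun j : Fin n => n - k ≤ (j : ℕ)), (t j - t ⟨n - k, hnk⟩) := by
    rw [Finset.sum_filter]
    refine Finset.sum_congr rfl fun j _ => ?_
    split_ifs with h
    · refine max_eq_left ?_
      have hle : t ⟨n - k, hnk⟩ ≤ t j := ht (show (⟨n - k, hnk⟩ : Fin n) ≤ j from by
        simpa [Fin.le_def] using h)
      linarith
    · refine max_eq_right ?_
      have hle : t j ≤ t ⟨n - k, hnk⟩ := ht (show j ≤ (⟨n - k, hnk⟩ : Fin n) from by
        simp only [Fin.le_def]; omega)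
      linarith
  rw [key, Finset.sum_sub_distrib, Finset.sum_const, card_ge]
  have h2 : n - (n - k) = k := by omega
  rw [h2, nsmul_eq_mul]
  ring

private theorem main {n : ℕ} (t : Fin n → ℝ) (ht : Monotone t) (ht0 : ∀ j, 0 ≤ t j)
    (m k : ℕ) (hmk : m < k) (hkn : k ≤ n) (hnk : n - k < n) :
    ((∑ j ∈ Finset.univ.filter (fun j : Fin n => n - k ≤ (j : ℕ) ∧ (j : ℕ) < n - m), t j) =
      sInf {v : ℝ | ∃ lam : ℝ, 0 ≤ lam ∧
        v = sSup {w : ℝ | ∃ lamhat : ℝ, lam ≤ lamhat ∧ w = Fobj t m k lam lamhat}}) ∧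
    (∀ hnm : n - m < n,
      Fobj t m k (t ⟨n - k, hnk⟩) (t ⟨n - m, hnm⟩) =
        ∑ j ∈ Finset.univ.filter (fun j : Fin n => n - k ≤ (j : ℕ) ∧ (j : ℕ) < n - m), t j) ∧
    sSup {w : ℝ | ∃ lamhat : ℝ, t ⟨n - k, hnk⟩ ≤ lamhat ∧
        w = Fobj t m k (t ⟨n - k, hnk⟩) lamhat} =
      ∑ j ∈ Finset.univ.filter (fun j : Fin n => n - k ≤ (j : ℕ) ∧ (j : ℕ) < n - m), t j := by
  have hk1 : 1 ≤ k := by omega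
  have hn : 0 < n := by omega
  have hmn : m ≤ n := by omega
  have hFobj : ∀ lam lamhat : ℝ, Fobj t m k lam lamhat =
      ((∑ j, max (t j - lam) 0) + (k : ℝ) * lam) -
        ((∑ j, max (t j - lamhat) 0) + (m : ℝ) * lamhat) := by
    intro lam lamhat
    unfold Fobj
    rw [Finset.sum_sub_distrib]
    ring
  have hsplit :
      ∑ j ∈ Finset.univ.filter (fun j : Fin n => n - k ≤ (j : ℕ)), t j =
        (∑ j ∈ Finset.univ.filter (fun j : Fin n => n - k ≤ (j : ℕ) ∧ (j : ℕ) < n - m), t j) +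
          ∑ j ∈ Finset.univ.filter (fun j : Fin n => n - m ≤ (j : ℕ)), t j := by
    rw [← Finset.sum_filter_add_sum_filter_not
      (Finset.univ.filter (fun j : Fin n => n - k ≤ (j : ℕ))) (fun j => (j : ℕ) < n - m) t]
    congr 1
    · apply Finset.sum_congr _ (fun _ _ => rfl)
      rw [Finset.filter_filter]
    · apply Finset.sum_congr _ (fun _ _ => rfl)
      rw [Finset.filter_filter]
      ext j
      simp only [Finset.mem_filter, Finset.mem_univ, true_and]
      omega
  -- the inner optimizer μ
  obtain ⟨μ, hμk, hμeq, hμD⟩ :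
      ∃ μ : ℝ, t ⟨n - k, hnk⟩ ≤ μ ∧
        ((∑ j, max (t j - μ) 0) + (m : ℝ) * μ =
          ∑ j ∈ Finset.univ.filter (fun j : Fin n => n - m ≤ (j : ℕ)), t j) ∧
        (∑ j ∈ Finset.univ.filter (fun j : Fin n => n - k ≤ (j : ℕ) ∧ (j : ℕ) < n - m), t j ≤
          ((k : ℝ) - (m : ℝ)) * μ) := by
    rcases Nat.eq_zero_or_pos m with hm0 | hm1
    · subst hm0
      refine ⟨t ⟨n - 1, by omega⟩, ht (by simp only [Fin.le_def]; omega), ?_, ?_⟩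
      · have h1 : (Finset.univ.filter (fun j : Fin n => n - 0 ≤ (j : ℕ))) = ∅ := by
          apply Finset.filter_false_of_mem
          intro j _
          omega
        rw [h1, Finset.sum_empty]
        have h2 : (∑ j, max (t j - t ⟨n - 1, by omega⟩) 0) = 0 := by
          apply Finset.sum_eq_zero
          intro j _
          refine max_eq_right ?_
          have : t j ≤ t ⟨n - 1, by omega⟩ := ht (by simp only [Fin.le_def]; omega)
          linarith
        rw [h2]; push_cast; ring
      · have hcard := card_between n (n - k) (n - 0) (by omega)
        have hle : ∀ j ∈ Finset.univ.filter
            (fun j : Fin n => n - k ≤ (j : ℕ) ∧ (j : ℕ) < n - 0), t j ≤ t ⟨n - 1, by omega⟩ := by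
          intro j _
          exact ht (by simp only [Fin.le_def]; omega)
        have := Finset.sum_le_card_nsmul _ _ _ hle
        rw [hcard] at this
        have hc : n - 0 - (n - k) = k := by omega
        rw [hc, nsmul_eq_mul] at this
        simpa using this
    · refine ⟨t ⟨n - m, by omega⟩, ht (by simp only [Fin.le_def]; omega), ?_, ?_⟩
      · exact Geq t ht m hmn (by omega)
      · have hcard := card_between n (n - k) (n - m) (by omega)
        have hle : ∀ j ∈ Finset.univ.filter
            (fun j : Fin n => n - k ≤ (j : ℕ) ∧ (j : ℕ) < n - m), t j ≤ t ⟨n - m, by omega⟩ := by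
          intro j hj
          simp only [Finset.mem_filter, Finset.mem_univ, true_and] at hj
          exact ht (by simp only [Fin.le_def]; omega)
        have := Finset.sum_le_card_nsmul _ _ _ hle
        rw [hcard] at this
        have hc : n - m - (n - k) = k - m := by omega
        rw [hc, nsmul_eq_mul, Nat.cast_sub hmk.le] at this
        exact this
  have hbdd : ∀ lam : ℝ,
      BddAbove {w : ℝ | ∃ lamhat : ℝ, lam ≤ lamhat ∧ w = Fobj t m k lam lamhat} := by
    intro lam
    refine ⟨((∑ j, max (t j - lam) 0) + (k : ℝ) * lam) -
      ∑ j ∈ Finset.univ.filter (fun j : Fin n => n - m ≤ (j : ℕ)), t j, ?_⟩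
    rintro w ⟨lh, hlh, rfl⟩
    rw [hFobj]
    have := Gge t m hmn lh
    linarith
  have parta : ∀ lam : ℝ,
      (∑ j ∈ Finset.univ.filter (fun j : Fin n => n - k ≤ (j : ℕ) ∧ (j : ℕ) < n - m), t j) ≤
        sSup {w : ℝ | ∃ lamhat : ℝ, lam ≤ lamhat ∧ w = Fobj t m k lam lamhat} := by
    intro lam
    rcases le_total lam μ with h | h
    · refine le_trans ?_ (le_csSup (hbdd lam) (show Fobj t m k lam μ ∈ _ from ⟨μ, h, rfl⟩))
      rw [hFobj]
      have h1 := Gge t k hkn lam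
      linarith
    · refine le_trans ?_ (le_csSup (hbdd lam) (show Fobj t m k lam lam ∈ _ from
        ⟨lam, le_refl _, rfl⟩))
      rw [hFobj]
      have h2 : ((k : ℝ) - (m : ℝ)) * μ ≤ ((k : ℝ) - (m : ℝ)) * lam := by
        apply mul_le_mul_of_nonneg_left h
        have : (m : ℝ) ≤ (k : ℝ) := by exact_mod_cast hmk.le
        linarith
      linarith
  have partb : sSup {w : ℝ | ∃ lamhat : ℝ, t ⟨n - k, hnk⟩ ≤ lamhat ∧
      w = Fobj t m k (t ⟨n - k, hnk⟩) lamhat} =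
      ∑ j ∈ Finset.univ.filter (fun j : Fin n => n - k ≤ (j : ℕ) ∧ (j : ℕ) < n - m), t j := by
    refine le_antisymm (csSup_le ⟨Fobj t m k (t ⟨n - k, hnk⟩) (t ⟨n - k, hnk⟩),
      t ⟨n - k, hnk⟩, le_refl _, rfl⟩ ?_) (parta _)
    rintro w ⟨lh, hlh, rfl⟩
    rw [hFobj]
    have h1 := Geq t ht k hkn hnk
    have h2 := Gge t m hmn lh
    linarith
  refine ⟨?_, ?_, partb⟩
  · have hmem : (∑ j ∈ Finset.univ.filter
        (fun j : Fin n => n - k ≤ (j : ℕ) ∧ (j : ℕ) < n - m), t j) ∈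
        {v : ℝ | ∃ lam : ℝ, 0 ≤ lam ∧
          v = sSup {w : ℝ | ∃ lamhat : ℝ, lam ≤ lamhat ∧ w = Fobj t m k lam lamhat}} :=
      ⟨t ⟨n - k, hnk⟩, ht0 _, partb.symm⟩
    refine le_antisymm (le_csInf ⟨_, hmem⟩ ?_) (csInf_le ?_ hmem)
    · rintro v ⟨lam, _, rfl⟩; exact parta lam
    · refine ⟨∑ j ∈ Finset.univ.filter
        (fun j : Fin n => n - k ≤ (j : ℕ) ∧ (j : ℕ) < n - m), t j, ?_⟩
      rintro v ⟨lam, _, rfl⟩; exact parta lam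
  · intro hnm
    rw [hFobj]
    have h1 := Geq t ht k hkn hnk
    have h2 := Geq t ht m hmn hnm
    linarith

/-- for nonnegative s and 0 ≤ m < k ≤ n,
ψ_{m,k}(s) = min_{λ ≥ 0} max_{λ̂ ≥ λ} F(λ,λ̂); the optimum is attained at
λ = s_[k] and λ̂ = s_[m] (when m ≥ 1, so that s_[m] is a genuine entry; the m-th
and k-th largest entries sit at ascending sorted positions n−m and n−k). -/
theorem stmt_15 (n m k : ℕ) (hmk : m < k) (hkn : k ≤ n) (s : Fin n → ℝ)
    (hs : ∀ i, 0 ≤ s i) :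
    rsum s m k =
      sInf {v : ℝ | ∃ lam : ℝ, 0 ≤ lam ∧
        v = sSup {w : ℝ | ∃ lamhat : ℝ, lam ≤ lamhat ∧ w = Fobj s m k lam lamhat}} ∧
    ∀ hm1 : 1 ≤ m,
      Fobj s m k (s (Tuple.sort s ⟨n - k, by omega⟩))
          (s (Tuple.sort s ⟨n - m, by omega⟩)) = rsum s m k ∧
      sSup {w : ℝ | ∃ lamhat : ℝ, s (Tuple.sort s ⟨n - k, by omega⟩) ≤ lamhat ∧
          w = Fobj s m k (s (Tuple.sort s ⟨n - k, by omega⟩)) lamhat} = rsum s m k := by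
  have hnk : n - k < n := by omega
  set t : Fin n → ℝ := fun j => s (Tuple.sort s j) with hts
  have ht : Monotone t := Tuple.monotone_sort s
  have ht0 : ∀ j, 0 ≤ t j := fun j => hs _
  have hFeq : Fobj s m k = Fobj t m k := by
    funext lam lamhat
    unfold Fobj
    rw [← Equiv.sum_comp (Tuple.sort s)
      (fun i => max (s i - lam) 0 - max (s i - lamhat) 0)]
  have hrs : rsum s m k =
      ∑ j ∈ Finset.univ.filter (fun j : Fin n => n - k ≤ (j : ℕ) ∧ (j : ℕ) < n - m), t j := rfl
  obtain ⟨h1, h2, h3⟩ := main t ht ht0 m k hmk hkn hnk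
  rw [hrs, hFeq]
  refine ⟨h1, fun hm1 => ⟨h2 (by omega), h3⟩⟩
end
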